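/- Fix a positive integer l and set r = 2^l − 1 and σ_r = Σ_{i=r+1}^{2r+1} 1/i. Then for all integers i, s with 0 ≤ i ≤ l−1 and 0 ≤ s ≤ 2^i − 1, the quantity apx(i,s) = σ_r / ((2^i + s + 1) · Σ_{j = 2^l + 2^{l−i−1}(2s+1)}^{2^l − 1 + 2^{l−i−1}(2s+2)} 1/j) satisfies apx(i,s) ≤ (2 − 1/2^l) σ_r < 2σ_r. -/

import Mathlib

/-- σ_r = Σ_{i=r+1}^{2r+1} 1/i -/
noncomputable def sigma (r : ℕ) : ℝ := ∑ i ∈ Finset.Icc (r + 1) (2 * r + 1), (1 : ℝ) / i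

/-- apx(i,s) = σ_r / ((2^i+s+1) · Σ_{j=2^l+2^{l-i-1}(2s+1)}^{2^l-1+2^{l-i-1}(2s+2)} 1/j),
with r = 2^l - 1. -/
noncomputable def apx (l i s : ℕ) : ℝ :=
  sigma (2 ^ l - 1) /
    (((2 : ℝ) ^ i + s + 1) *
      ∑ j ∈ Finset.Icc (2 ^ l + 2 ^ (l - i - 1) * (2 * s + 1))
          (2 ^ l - 1 + 2 ^ (l - i - 1) * (2 * s + 2)), (1 : ℝ) / j)

/-!
Write `N = 2^l`, `m = 2^(l-i-1)` and `P = 2^i`, so that `N = 2mP`. The denominator of `apx l i s`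
is `(P + s + 1)` times a block of `m` consecutive reciprocals ending at `b = N - 1 + m(2s+2)`;
since `b + 1 = 2m(P + s + 1) ≤ 2N`, bounding every term below by `1/b` gives a denominator of
at least `(b+1)/(2b) ≥ N/(2N-1)`, and `σ / (N/(2N-1)) = (2 - 1/N) σ`.
-/

open Finset

lemma sigma_pos (r : ℕ) : 0 < sigma r :=
  sum_pos (fun i hi => one_div_pos.2 <| Nat.cast_pos.2 <| by have := (mem_Icc.1 hi).1; omega)
    ⟨r + 1, by simp; omega⟩

lemma card_div_le_sum_Icc_one_div {a b : ℕ} (ha : 0 < a) :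
    (#(Icc a b) : ℝ) / b ≤ ∑ j ∈ Icc a b, (1 : ℝ) / j := by
  rw [div_eq_mul_one_div, ← nsmul_eq_mul]
  refine card_nsmul_le_sum _ _ _ fun j hj => ?_
  obtain ⟨haj, hjb⟩ := mem_Icc.1 hj
  exact one_div_le_one_div_of_le (by exact_mod_cast ha.trans_le haj) (by exact_mod_cast hjb)

lemma div_two_mul_sub_one_le {N b : ℝ} (hb : 0 < b) (hbN : b + 1 ≤ 2 * N) :
    N / (2 * N - 1) ≤ (b + 1) / (2 * b) := by
  rw [div_le_div_iff₀ (by linarith) (by positivity)]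
  nlinarith

lemma div_two_mul_sub_one_le_mul_sum_Icc {N m P s : ℕ} (hNmP : 2 * m * P = N) (hm : 0 < m)
    (hs : s < P) :
    (N : ℝ) / (2 * N - 1) ≤
      ((P : ℝ) + s + 1) *
        ∑ j ∈ Icc (N + m * (2 * s + 1)) (N - 1 + m * (2 * s + 2)), (1 : ℝ) / j := by
  set b := N - 1 + m * (2 * s + 2)
  have hN0 : 0 < N := hNmP ▸ Nat.mul_pos (Nat.mul_pos two_pos hm) (by omega)
  have hms : m * (2 * s + 2) = m * (2 * s + 1) + m := by ring
  have hb : b + 1 = 2 * m * (P + s + 1) := by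
    rw [show b + 1 = N + m * (2 * s + 2) by omega, ← hNmP]
    ring
  have hbN : b + 1 ≤ 2 * N := by
    have : m * (2 * s + 2) ≤ 2 * m * P := by rw [mul_comm 2 m, mul_assoc]; gcongr; omega
    omega
  have hcard : #(Icc (N + m * (2 * s + 1)) b) = m := by rw [Nat.card_Icc]; omega
  have hbR : ((b : ℝ) + 1) = 2 * m * (P + s + 1) := by exact_mod_cast hb
  have hb0 : (0 : ℝ) < b := by exact_mod_cast (by omega : 0 < b)
  calc (N : ℝ) / (2 * N - 1) ≤ (b + 1) / (2 * b) :=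
        div_two_mul_sub_one_le hb0 (by exact_mod_cast hbN)
    _ = ((P : ℝ) + s + 1) * (m / b) := by rw [hbR]; field_simp
    _ ≤ _ := by
      gcongr
      have := card_div_le_sum_Icc_one_div (b := b) (by omega : 0 < N + m * (2 * s + 1))
      rwa [hcard] at this

theorem apx_le (l : ℕ) (hl : 1 ≤ l) :
    ∀ i s : ℕ, i ≤ l - 1 → s ≤ 2 ^ i - 1 →
      apx l i s ≤ (2 - 1 / 2 ^ l) * sigma (2 ^ l - 1) ∧
        (2 - 1 / 2 ^ l) * sigma (2 ^ l - 1) < 2 * sigma (2 ^ l - 1) := by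
  intro i s hi hs
  have hσ := sigma_pos (2 ^ l - 1)
  have hNmP : 2 * 2 ^ (l - i - 1) * 2 ^ i = 2 ^ l := by
    rw [← pow_succ', ← pow_add]; congr 1; omega
  have hD := div_two_mul_sub_one_le_mul_sum_Icc hNmP (by positivity)
    (by have := @Nat.one_le_two_pow i; omega : s < 2 ^ i)
  push_cast at hD
  have hX : (0 : ℝ) < 2 ^ l / (2 * 2 ^ l - 1) := by
    have : (1 : ℝ) ≤ 2 ^ l := one_le_pow₀ one_le_two
    exact div_pos (by positivity) (by linarith)
  have hcoef : (2 - 1 / 2 ^ l : ℝ) * sigma (2 ^ l - 1) =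
      sigma (2 ^ l - 1) / (2 ^ l / (2 * 2 ^ l - 1)) := by
    field_simp
  constructor
  · rw [hcoef]
    exact div_le_div_of_nonneg_left hσ.le hX hD
  · have : (0 : ℝ) < 1 / 2 ^ l := by positivity
    exact mul_lt_mul_of_pos_right (by linarith) hσ
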